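/- Define h : ℝ → ℝ by h(u) = (7 + 44u² + 40u⁴)/(3√(1+u²)) − (16/(3π))·( 4/3 + 5u² + u·(3 + 5u²)·arctan(u) ). Then: (a) h satisfies the ordinary differential equation (d/du)( (1+u²)·h'(u) ) − 12·h(u) = −(1+u²)^{−3/2} for all u ∈ ℝ; (b) h is even, i.e. h(−u) = h(u); (c) 6·|u|³·h(u) → 1 as u → ±∞; and (d) h is the unique smooth even function on ℝ satisfying (a) and (c): if g : ℝ → ℝ is smooth, even, satisfies the same differential equation, and 6·|u|³·g(u) → 1 as u → ±∞, then g = h. -/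

import Mathlib

open Real Filter

/-- The function `h` from the Poincaré-series solution. -/
noncomputable def hfun (u : ℝ) : ℝ :=
  (7 + 44 * u ^ 2 + 40 * u ^ 4) / (3 * Real.sqrt (1 + u ^ 2)) -
    16 / (3 * π) * (4 / 3 + 5 * u ^ 2 + u * (3 + 5 * u ^ 2) * Real.arctan u)

noncomputable def hder (u : ℝ) : ℝ :=
  u * (81 + 204 * u ^ 2 + 120 * u ^ 4) / (3 * (1 + u ^ 2) * Real.sqrt (1 + u ^ 2)) -
    16 / (3 * π) * (10 * u + 3 * (1 + 5 * u ^ 2) * Real.arctan u +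
      u * (3 + 5 * u ^ 2) / (1 + u ^ 2))

noncomputable def Kfun (v : ℝ) : ℝ :=
  v * (81 + 204 * v ^ 2 + 120 * v ^ 4) / (3 * Real.sqrt (1 + v ^ 2)) -
    16 / (3 * π) * (10 * v * (1 + v ^ 2) + 3 * (1 + 5 * v ^ 2) * (1 + v ^ 2) * Real.arctan v +
      v * (3 + 5 * v ^ 2))

noncomputable def Kder (u : ℝ) : ℝ :=
  (81 + 612 * u ^ 2 + 1008 * u ^ 4 + 480 * u ^ 6) / (3 * (1 + u ^ 2) * Real.sqrt (1 + u ^ 2)) -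
    16 / (3 * π) * (16 + 60 * u ^ 2 + 12 * u * (3 + 5 * u ^ 2) * Real.arctan u)

lemma one_add_sq_pos (u : ℝ) : (0:ℝ) < 1 + u ^ 2 := by positivity

lemma sqrt_pos' (u : ℝ) : 0 < Real.sqrt (1 + u ^ 2) := Real.sqrt_pos.2 (one_add_sq_pos u)

lemma sq_sqrt' (u : ℝ) : Real.sqrt (1 + u ^ 2) ^ 2 = 1 + u ^ 2 :=
  Real.sq_sqrt (one_add_sq_pos u).le

lemma hasDerivAt_sqrt' (u : ℝ) :
    HasDerivAt (fun v : ℝ => Real.sqrt (1 + v ^ 2)) (u / Real.sqrt (1 + u ^ 2)) u := by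
  have h1 : HasDerivAt (fun v : ℝ => 1 + v ^ 2) (2 * u) u := by
    simpa using (hasDerivAt_pow 2 u).const_add 1
  have := (Real.hasDerivAt_sqrt (one_add_sq_pos u).ne').comp u h1
  refine this.congr_deriv ?_
  have := (sqrt_pos' u).ne'
  field_simp

lemma key1 (u s : ℝ) (hspos : 0 < s) (hs2 : s ^ 2 = 1 + u ^ 2) :
    u * (81 + 204 * u ^ 2 + 120 * u ^ 4) / (3 * (1 + u ^ 2) * s) =
    ((88 * u + 160 * u ^ 3) * (3 * s) - (7 + 44 * u ^ 2 + 40 * u ^ 4) * (3 * (u / s))) /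
      (3 * s) ^ 2 := by
  have hne : (1:ℝ) + u ^ 2 ≠ 0 := by positivity
  rw [div_eq_div_iff (by positivity) (by positivity)]
  field_simp
  linear_combination (9 * u * (81 + 204 * u ^ 2 + 120 * u ^ 4) - u*(729+1836*u^2+1080*u^4) - s*(63*u+396*u^3+360*u^5) + (63*u*s+396*u^3*s+360*u^5*s-7*u-44*u^3-40*u^5)) * hs2

lemma key2 (u s : ℝ) (hspos : 0 < s) (hs2 : s ^ 2 = 1 + u ^ 2) :
    (81 + 612 * u ^ 2 + 1008 * u ^ 4 + 480 * u ^ 6) / (3 * (1 + u ^ 2) * s) =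
    ((81 + 612 * u ^ 2 + 600 * u ^ 4) * (3 * s) -
      u * (81 + 204 * u ^ 2 + 120 * u ^ 4) * (3 * (u / s))) / (3 * s) ^ 2 := by
  have hne : (1:ℝ) + u ^ 2 ≠ 0 := by positivity
  rw [div_eq_div_iff (by positivity) (by positivity)]
  field_simp
  linear_combination (-(s*(729*u^2+1836*u^4+1080*u^6)) + (729*u^2*s+1836*u^4*s+1080*u^6*s-81*u^2-204*u^4-120*u^6)) * hs2

lemma key3 (u s : ℝ) (hspos : 0 < s) (hs2 : s ^ 2 = 1 + u ^ 2) :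
    (81 + 612 * u ^ 2 + 1008 * u ^ 4 + 480 * u ^ 6) / (3 * (1 + u ^ 2) * s) -
      12 * ((7 + 44 * u ^ 2 + 40 * u ^ 4) / (3 * s)) = -(1 / ((1 + u ^ 2) * s)) := by
  have hne : (1:ℝ) + u ^ 2 ≠ 0 := by positivity
  field_simp
  linear_combination (0:ℝ) * hs2

lemma hasDerivAt_hfun (u : ℝ) : HasDerivAt hfun (hder u) u := by
  have hs := hasDerivAt_sqrt' u
  have hsne := (sqrt_pos' u).ne'
  have hne := (one_add_sq_pos u).ne'
  have hP : HasDerivAt (fun v : ℝ => 7 + 44 * v ^ 2 + 40 * v ^ 4)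
      (88 * u + 160 * u ^ 3) u := by
    have := (((hasDerivAt_pow 2 u).const_mul (44:ℝ)).const_add 7).add
      ((hasDerivAt_pow 4 u).const_mul (40:ℝ))
    refine this.congr_deriv ?_
    push_cast
    ring
  have hA := hP.div (hs.const_mul 3) (by positivity)
  have hq : HasDerivAt (fun v : ℝ => v * (3 + 5 * v ^ 2)) (3 + 15 * u ^ 2) u := by
    have := (hasDerivAt_id u).mul (((hasDerivAt_pow 2 u).const_mul (5:ℝ)).const_add 3)
    refine this.congr_deriv ?_
    simp only [id_eq]
    push_cast
    ring
  have hB : HasDerivAt (fun v : ℝ => 16 / (3 * π) *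
      (4 / 3 + 5 * v ^ 2 + v * (3 + 5 * v ^ 2) * Real.arctan v))
      (16 / (3 * π) * (5 * (2 * u) + ((3 + 15 * u ^ 2) * Real.arctan u +
        u * (3 + 5 * u ^ 2) * (1 / (1 + u ^ 2))))) u := by
    have := ((((hasDerivAt_pow 2 u).const_mul (5:ℝ)).const_add (4/3)).add
      (hq.mul (Real.hasDerivAt_arctan u))).const_mul (16 / (3 * π))
    refine this.congr_deriv ?_
    push_cast
    ring
  have hAB := hA.sub hB
  unfold hfun
  refine hAB.congr_deriv ?_
  unfold hder
  rw [key1 u _ (sqrt_pos' u) (sq_sqrt' u)]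
  field_simp
  ring

lemma hasDerivAt_Kfun (u : ℝ) : HasDerivAt Kfun (Kder u) u := by
  have hs := hasDerivAt_sqrt' u
  have hsne := (sqrt_pos' u).ne'
  have hne := (one_add_sq_pos u).ne'
  have hπ := Real.pi_ne_zero
  have hN : HasDerivAt (fun v : ℝ => v * (81 + 204 * v ^ 2 + 120 * v ^ 4))
      (81 + 612 * u ^ 2 + 600 * u ^ 4) u := by
    have := (hasDerivAt_id u).mul ((((hasDerivAt_pow 2 u).const_mul (204:ℝ)).const_add 81).add
      ((hasDerivAt_pow 4 u).const_mul (120:ℝ)))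
    refine this.congr_deriv ?_
    simp only [id_eq, Pi.add_apply]
    push_cast
    ring
  have hA := hN.div (hs.const_mul 3) (by positivity)
  have h1 : HasDerivAt (fun v : ℝ => 10 * v * (1 + v ^ 2)) (10 + 30 * u ^ 2) u := by
    have := ((hasDerivAt_id u).const_mul (10:ℝ)).mul ((hasDerivAt_pow 2 u).const_add 1)
    refine this.congr_deriv ?_
    simp only [id_eq]
    push_cast
    ring
  have hR : HasDerivAt (fun v : ℝ => 3 * (1 + 5 * v ^ 2) * (1 + v ^ 2)) (36 * u + 60 * u ^ 3) u := by
    have := ((((hasDerivAt_pow 2 u).const_mul (5:ℝ)).const_add 1).const_mul (3:ℝ)).mul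
      ((hasDerivAt_pow 2 u).const_add 1)
    refine this.congr_deriv ?_
    push_cast
    ring
  have h2 := hR.mul (Real.hasDerivAt_arctan u)
  have h3 : HasDerivAt (fun v : ℝ => v * (3 + 5 * v ^ 2)) (3 + 15 * u ^ 2) u := by
    have := (hasDerivAt_id u).mul (((hasDerivAt_pow 2 u).const_mul (5:ℝ)).const_add 3)
    refine this.congr_deriv ?_
    simp only [id_eq]
    push_cast
    ring
  have hB := ((h1.add h2).add h3).const_mul (16 / (3 * π))
  have hAB := hA.sub hB
  unfold Kfun
  refine hAB.congr_deriv ?_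
  unfold Kder
  rw [key2 u _ (sqrt_pos' u) (sq_sqrt' u)]
  field_simp
  ring

lemma Kfun_eq (u : ℝ) : Kfun u = (1 + u ^ 2) * hder u := by
  have hsne := (sqrt_pos' u).ne'
  have hne := (one_add_sq_pos u).ne'
  have hπ := Real.pi_ne_zero
  unfold Kfun hder
  field_simp

lemma rpow_neg_three_halves (u : ℝ) :
    ((1:ℝ) + u ^ 2) ^ (-(3:ℝ)/2) = 1 / ((1 + u ^ 2) * Real.sqrt (1 + u ^ 2)) := by
  have h : (0:ℝ) < 1 + u ^ 2 := one_add_sq_pos u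
  rw [show (-(3:ℝ)/2) = -(1 + 1/2) by norm_num, Real.rpow_neg h.le, Real.rpow_add h,
    Real.rpow_one, ← Real.sqrt_eq_rpow, one_div]

lemma Kder_ode (u : ℝ) : Kder u - 12 * hfun u = -(1 + u ^ 2) ^ (-(3:ℝ)/2) := by
  rw [rpow_neg_three_halves]
  have h3 := key3 u (Real.sqrt (1 + u ^ 2)) (sqrt_pos' u) (sq_sqrt' u)
  have hc : 16 / (3 * π) * (16 + 60 * u ^ 2 + 12 * u * (3 + 5 * u ^ 2) * Real.arctan u) =
      12 * (16 / (3 * π) * (4 / 3 + 5 * u ^ 2 + u * (3 + 5 * u ^ 2) * Real.arctan u)) := by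
    ring
  unfold Kder hfun
  linarith [h3, hc]

lemma deriv_hfun : deriv hfun = hder := funext fun u => (hasDerivAt_hfun u).deriv

lemma hfun_ode (u : ℝ) :
    deriv (fun v : ℝ => (1 + v ^ 2) * deriv hfun v) u - 12 * hfun u
      = -(1 + u ^ 2) ^ (-(3:ℝ)/2) := by
  have hfk : (fun v : ℝ => (1 + v ^ 2) * deriv hfun v) = Kfun := by
    funext v
    rw [deriv_hfun]
    exact (Kfun_eq v).symm
  rw [hfk, (hasDerivAt_Kfun u).deriv]
  exact Kder_ode u

lemma hfun_even (u : ℝ) : hfun (-u) = hfun u := by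
  unfold hfun
  rw [show ((-u:ℝ)) ^ 2 = u ^ 2 by ring, show ((-u:ℝ)) ^ 4 = u ^ 4 by ring, Real.arctan_neg]
  ring

noncomputable def psi (x : ℝ) : ℝ := x - x ^ 3 / 3 + x ^ 5 / 5 - Real.arctan x

lemma hasDerivAt_psi (x : ℝ) : HasDerivAt psi (x ^ 6 / (1 + x ^ 2)) x := by
  have hne : (1:ℝ) + x ^ 2 ≠ 0 := (one_add_sq_pos x).ne'
  have := (((hasDerivAt_id x).sub ((hasDerivAt_pow 3 x).div_const 3)).add
    ((hasDerivAt_pow 5 x).div_const 5)).sub (Real.hasDerivAt_arctan x)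
  refine this.congr_deriv ?_
  push_cast
  field_simp
  ring

lemma psi_nonneg {x : ℝ} (hx : 0 ≤ x) : 0 ≤ psi x := by
  have hm : Monotone psi :=
    monotone_of_deriv_nonneg (fun y => (hasDerivAt_psi y).differentiableAt)
      (fun y => by rw [(hasDerivAt_psi y).deriv]; positivity)
  have h0 : psi 0 = 0 := by simp [psi]
  have := hm hx
  rwa [h0] at this

lemma psi_le {x : ℝ} (hx : 0 ≤ x) : psi x ≤ x ^ 7 / 7 := by
  have hd : ∀ y : ℝ, HasDerivAt (fun t : ℝ => t ^ 7 / 7 - psi t) (y ^ 8 / (1 + y ^ 2)) y := by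
    intro y
    have hne : (1:ℝ) + y ^ 2 ≠ 0 := (one_add_sq_pos y).ne'
    have := ((hasDerivAt_pow 7 y).div_const 7).sub (hasDerivAt_psi y)
    refine this.congr_deriv ?_
    push_cast
    field_simp
    ring
  have hm : Monotone (fun t : ℝ => t ^ 7 / 7 - psi t) :=
    monotone_of_deriv_nonneg (fun y => (hd y).differentiableAt)
      (fun y => by rw [(hd y).deriv]; positivity)
  have h := hm hx
  norm_num [psi, Real.arctan_zero] at h ⊢
  linarith

noncomputable def Gfun (t : ℝ) : ℝ :=
  6 * (40 + 49 * t ^ 2) /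
    (3 * Real.sqrt (1 + t ^ 2) *
      (40 + 44 * t ^ 2 + 7 * t ^ 4 + 8 * Real.sqrt (1 + t ^ 2) * (5 + 3 * t ^ 2)))

noncomputable def phi1 (u : ℝ) : ℝ :=
  6 * u ^ 3 * ((7 + 44 * u ^ 2 + 40 * u ^ 4) / (3 * Real.sqrt (1 + u ^ 2)) -
    8 / 3 * (5 * u ^ 3 + 3 * u))

noncomputable def phi2 (u : ℝ) : ℝ :=
  6 * u ^ 3 * (16 / (3 * π) * (u * (3 + 5 * u ^ 2) * Real.arctan u⁻¹ - (5 * u ^ 2 + 4 / 3)))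

lemma Gfun_zero : Gfun 0 = 1 := by
  unfold Gfun
  norm_num [Real.sqrt_one]

lemma Gfun_contAt : ContinuousAt Gfun 0 := by
  unfold Gfun
  apply ContinuousAt.div
  · fun_prop
  · fun_prop
  · norm_num [Real.sqrt_one]

lemma key4 {u : ℝ} (hu : 0 < u) : Gfun (1 / u) = phi1 u := by
  have hs2 := sq_sqrt' u
  have hspos := sqrt_pos' u
  have hsne := hspos.ne'
  have hune := hu.ne'
  have hsu : Real.sqrt (1 + (1 / u) ^ 2) = Real.sqrt (1 + u ^ 2) / u := by
    have h' : (1:ℝ) + (1 / u) ^ 2 = (Real.sqrt (1 + u ^ 2) / u) ^ 2 := by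
      field_simp
      linear_combination (-1:ℝ) * hs2
    rw [h', Real.sqrt_sq (by positivity)]
  have hbig : (0:ℝ) < 40 + 44 * (1/u) ^ 2 + 7 * (1/u) ^ 4 +
      8 * (Real.sqrt (1 + u ^ 2) / u) * (5 + 3 * (1/u) ^ 2) := by
    have h1 : (0:ℝ) < 8 * (Real.sqrt (1 + u ^ 2) / u) * (5 + 3 * (1/u) ^ 2) := by
      apply mul_pos (mul_pos (by norm_num) (div_pos hspos hu))
      positivity
    have h2 : (0:ℝ) < 40 + 44 * (1/u) ^ 2 + 7 * (1/u) ^ 4 := by positivity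
    linarith
  unfold Gfun phi1
  rw [hsu]
  rw [div_eq_iff (by positivity)]
  field_simp
  linear_combination (576*u^2 + 1920*u^4 + 1600*u^6) * hs2

lemma tendsto_phi1 : Filter.Tendsto phi1 atTop (nhds 1) := by
  have h0 : Filter.Tendsto (fun u : ℝ => 1 / u) atTop (nhds 0) := by
    simpa [one_div] using tendsto_inv_atTop_zero
  have h1 := Gfun_contAt.tendsto.comp h0
  rw [Gfun_zero] at h1
  apply h1.congr'
  filter_upwards [eventually_gt_atTop 0] with u hu
  exact key4 hu

lemma phi2_eq {u : ℝ} (hu : 0 < u) :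
    phi2 u = 32 / π * (3 / (5 * u)) - 32 / π * (u ^ 3 * (u * (3 + 5 * u ^ 2)) * psi u⁻¹) := by
  have hπ := Real.pi_ne_zero
  have hune := hu.ne'
  unfold phi2 psi
  field_simp
  ring

lemma phi2_bound {u : ℝ} (hu : 1 ≤ u) : |phi2 u| ≤ 22 / u := by
  have hu0 : (0:ℝ) < u := lt_of_lt_of_le one_pos hu
  have hπ0 := Real.pi_pos
  have hπ3 := Real.pi_gt_three
  have hp1 : 0 ≤ psi u⁻¹ := psi_nonneg (by positivity)
  have hp2 : psi u⁻¹ ≤ (u⁻¹) ^ 7 / 7 := psi_le (by positivity)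
  rw [phi2_eq hu0, abs_le]
  set W := u ^ 3 * (u * (3 + 5 * u ^ 2)) * psi u⁻¹ with hW
  have hW0 : 0 ≤ W := mul_nonneg (by positivity) hp1
  have hW2 : W ≤ 2 / u := by
    have h1 : W ≤ u ^ 3 * (u * (3 + 5 * u ^ 2)) * ((u⁻¹) ^ 7 / 7) :=
      mul_le_mul_of_nonneg_left hp2 (by positivity)
    have h2 : u ^ 3 * (u * (3 + 5 * u ^ 2)) * ((u⁻¹) ^ 7 / 7)
        = 3 / (7 * u ^ 3) + 5 / (7 * u) := by
      field_simp
    have h3 : 3 / (7 * u ^ 3) ≤ 3 / (7 * u) := by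
      rw [div_le_div_iff₀ (by positivity) (by positivity)]
      nlinarith
    have h5 : 3 / (7 * u) + 5 / (7 * u) ≤ 2 / u := by
      rw [← add_div, div_le_div_iff₀ (by positivity) (by positivity)]
      nlinarith
    linarith
  have hc1 : 32 / π ≤ 32 / 3 := by
    rw [div_le_div_iff₀ hπ0 (by norm_num)]
    nlinarith
  have hc0 : (0:ℝ) < 32 / π := by positivity
  constructor
  · have e1 : 32 / π * W ≤ 32 / 3 * (2 / u) :=
      mul_le_mul hc1 hW2 hW0 (by norm_num)
    have e2 : (32:ℝ) / 3 * (2 / u) ≤ 22 / u := by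
      rw [show (32:ℝ) / 3 * (2 / u) = 64 / (3 * u) by ring,
        div_le_div_iff₀ (by positivity) (by positivity)]
      nlinarith
    have e3 : 0 ≤ 32 / π * (3 / (5 * u)) := by positivity
    linarith
  · have e1 : 32 / π * (3 / (5 * u)) ≤ 32 / 3 * (3 / (5 * u)) :=
      mul_le_mul_of_nonneg_right hc1 (by positivity)
    have e2 : (32:ℝ) / 3 * (3 / (5 * u)) ≤ 22 / u := by
      rw [show (32:ℝ) / 3 * (3 / (5 * u)) = 32 / (5 * u) by ring,
        div_le_div_iff₀ (by positivity) (by positivity)]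
      nlinarith
    have e3 : 0 ≤ 32 / π * W := mul_nonneg hc0.le hW0
    linarith

lemma tendsto_phi2 : Filter.Tendsto phi2 atTop (nhds 0) := by
  have hU : Filter.Tendsto (fun u : ℝ => 22 / u) atTop (nhds 0) := by
    have := tendsto_inv_atTop_zero.const_mul (22:ℝ)
    rw [mul_zero] at this
    apply this.congr
    intro u
    rw [div_eq_mul_inv]
  have hL : Filter.Tendsto (fun u : ℝ => -(22 / u)) atTop (nhds 0) := by
    simpa using hU.neg
  apply tendsto_of_tendsto_of_tendsto_of_le_of_le' hL hU
  · filter_upwards [eventually_ge_atTop 1] with u hu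
    exact (abs_le.1 (phi2_bound hu)).1
  · filter_upwards [eventually_ge_atTop 1] with u hu
    exact (abs_le.1 (phi2_bound hu)).2

lemma hfun_split {u : ℝ} (hu : 1 ≤ u) : 6 * |u| ^ 3 * hfun u = phi1 u + phi2 u := by
  have hu0 : (0:ℝ) < u := lt_of_lt_of_le one_pos hu
  have hπ := Real.pi_ne_zero
  have hsne := (sqrt_pos' u).ne'
  rw [abs_of_pos hu0]
  unfold hfun phi1 phi2
  rw [show Real.arctan u = π / 2 - Real.arctan u⁻¹ by rw [Real.arctan_inv_of_pos hu0]; ring]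
  field_simp
  ring

lemma hfun_tendsto_top : Filter.Tendsto (fun u : ℝ => 6 * |u| ^ 3 * hfun u) atTop (nhds 1) := by
  have h := tendsto_phi1.add tendsto_phi2
  rw [add_zero] at h
  apply h.congr'
  filter_upwards [eventually_ge_atTop 1] with u hu
  exact (hfun_split hu).symm

lemma hfun_tendsto_bot : Filter.Tendsto (fun u : ℝ => 6 * |u| ^ 3 * hfun u) atBot (nhds 1) := by
  have h := hfun_tendsto_top.comp tendsto_neg_atBot_atTop
  apply h.congr
  intro u
  simp only [Function.comp_apply]
  rw [abs_neg, hfun_even]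

lemma nonpos_aux (f F : ℝ → ℝ) (hf : Differentiable ℝ f) (hF : Differentiable ℝ F)
    (hFf : ∀ u, F u = (1 + u ^ 2) * deriv f u) (hF' : ∀ u, deriv F u = 12 * f u)
    (h0 : Filter.Tendsto f atTop (nhds 0)) (h0' : Filter.Tendsto f atBot (nhds 0)) :
    ∀ u, f u ≤ 0 := by
  by_contra hcon
  push_neg at hcon
  obtain ⟨u₀, hu₀⟩ := hcon
  obtain ⟨b, hb⟩ := Filter.eventually_atTop.1 (h0.eventually (eventually_lt_nhds hu₀))
  obtain ⟨a, ha⟩ := Filter.eventually_atBot.1 (h0'.eventually (eventually_lt_nhds hu₀))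
  have hmem : u₀ ∈ Set.Icc (min a u₀) (max b u₀) := ⟨min_le_right _ _, le_max_right _ _⟩
  obtain ⟨x, hx, hxmax⟩ := isCompact_Icc.exists_isMaxOn ⟨u₀, hmem⟩ hf.continuous.continuousOn
  have hxu : f u₀ ≤ f x := hxmax hmem
  have hglob : ∀ y, f y ≤ f x := by
    intro y
    rcases lt_or_ge y (min a u₀) with h | h
    · exact le_trans (ha y (le_trans h.le (min_le_left _ _))).le hxu
    · rcases le_or_gt y (max b u₀) with h2 | h2
      · exact hxmax ⟨h, h2⟩
      · exact le_trans (hb y (le_trans (le_max_left _ _) h2.le)).le hxu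
  have hloc : IsLocalMax f x := Filter.Eventually.of_forall hglob
  have hdx : deriv f x = 0 := hloc.deriv_eq_zero
  have hFx : F x = 0 := by rw [hFf, hdx, mul_zero]
  have hfx : 0 < f x := lt_of_lt_of_le hu₀ hxu
  have hopen : IsOpen {v : ℝ | f x / 2 < f v} := isOpen_lt continuous_const hf.continuous
  have hxin : x ∈ {v : ℝ | f x / 2 < f v} := by
    simp only [Set.mem_setOf_eq]
    linarith
  obtain ⟨δ, hδ, hball⟩ := Metric.isOpen_iff.1 hopen x hxin
  have hsub : Set.Icc x (x + δ / 2) ⊆ {v : ℝ | f x / 2 < f v} := by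
    intro v hv
    apply hball
    rw [Metric.mem_ball, Real.dist_eq, abs_lt]
    obtain ⟨h1, h2⟩ := hv
    constructor <;> linarith
  have hFmono : StrictMonoOn F (Set.Icc x (x + δ / 2)) := by
    apply strictMonoOn_of_deriv_pos (convex_Icc _ _) hF.continuous.continuousOn
    intro v hv
    rw [interior_Icc] at hv
    rw [hF']
    have := hsub ⟨hv.1.le, hv.2.le⟩
    simp only [Set.mem_setOf_eq] at this
    linarith
  have hfmono : StrictMonoOn f (Set.Icc x (x + δ / 2)) := by
    apply strictMonoOn_of_deriv_pos (convex_Icc _ _) hf.continuous.continuousOn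
    intro v hv
    rw [interior_Icc] at hv
    have hFv : 0 < F v := by
      have := hFmono (Set.left_mem_Icc.2 (by linarith)) ⟨hv.1.le, hv.2.le⟩ hv.1
      rwa [hFx] at this
    have hd : deriv f v = F v / (1 + v ^ 2) := by
      rw [hFf v]
      field_simp
    rw [hd]
    exact div_pos hFv (one_add_sq_pos v)
  have hlt : f x < f (x + δ / 2) :=
    hfmono (Set.left_mem_Icc.2 (by linarith)) (Set.right_mem_Icc.2 (by linarith)) (by linarith)
  exact absurd (hglob (x + δ / 2)) (not_le.2 hlt)

/-- `hfun` solves `((1+u²)h')' − 12h = −(1+u²)^{−3/2}`, is even, satisfies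
`6|u|³h(u) → 1` as `u → ±∞`, and is the unique smooth even function with these
properties. -/
theorem hfun_characterization :
    (∀ u : ℝ,
        deriv (fun v : ℝ => (1 + v ^ 2) * deriv hfun v) u - 12 * hfun u =
          -(1 + u ^ 2) ^ (-(3 : ℝ) / 2)) ∧
    (∀ u : ℝ, hfun (-u) = hfun u) ∧
    (Filter.Tendsto (fun u : ℝ => 6 * |u| ^ 3 * hfun u) Filter.atTop (nhds 1) ∧
      Filter.Tendsto (fun u : ℝ => 6 * |u| ^ 3 * hfun u) Filter.atBot (nhds 1)) ∧
    (∀ g : ℝ → ℝ, ContDiff ℝ (⊤ : ℕ∞) g →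
      (∀ u : ℝ, g (-u) = g u) →
      (∀ u : ℝ,
        deriv (fun v : ℝ => (1 + v ^ 2) * deriv g v) u - 12 * g u =
          -(1 + u ^ 2) ^ (-(3 : ℝ) / 2)) →
      Filter.Tendsto (fun u : ℝ => 6 * |u| ^ 3 * g u) Filter.atTop (nhds 1) →
      Filter.Tendsto (fun u : ℝ => 6 * |u| ^ 3 * g u) Filter.atBot (nhds 1) →
      g = hfun) := by
  refine ⟨hfun_ode, hfun_even, ⟨hfun_tendsto_top, hfun_tendsto_bot⟩, ?_⟩
  intro g hg hgeven hgode hgtop hgbot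
  have hgdiff : Differentiable ℝ g := (hg.of_le (WithTop.coe_le_coe.mpr le_top) : ContDiff ℝ 2 g).differentiable two_ne_zero
  have h11 : ContDiff ℝ (1 + 1 : WithTop ℕ∞) g := hg.of_le (WithTop.coe_le_coe.mpr le_top)
  have hdg : Differentiable ℝ (deriv g) :=
    ((contDiff_succ_iff_deriv.mp h11).2.2).differentiable one_ne_zero
  have hfd : Differentiable ℝ (fun u : ℝ => g u - hfun u) :=
    hgdiff.sub fun u => (hasDerivAt_hfun u).differentiableAt
  have hF1 : Differentiable ℝ (fun v : ℝ => (1 + v ^ 2) * deriv g v) :=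
    ((differentiable_pow 2).const_add 1).mul hdg
  have hFd : Differentiable ℝ (fun u : ℝ => (1 + u ^ 2) * deriv g u - Kfun u) :=
    hF1.sub fun u => (hasDerivAt_Kfun u).differentiableAt
  have hderf : ∀ u, deriv (fun u : ℝ => g u - hfun u) u = deriv g u - hder u := fun u =>
    (((hgdiff u).hasDerivAt).sub (hasDerivAt_hfun u)).deriv
  have hFf : ∀ u, (1 + u ^ 2) * deriv g u - Kfun u
      = (1 + u ^ 2) * deriv (fun u : ℝ => g u - hfun u) u := by
    intro u
    rw [hderf u, Kfun_eq]
    ring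
  have hF' : ∀ u, deriv (fun u : ℝ => (1 + u ^ 2) * deriv g u - Kfun u) u
      = 12 * (g u - hfun u) := by
    intro u
    have h1 : HasDerivAt (fun u : ℝ => (1 + u ^ 2) * deriv g u - Kfun u)
        (deriv (fun v : ℝ => (1 + v ^ 2) * deriv g v) u - Kder u) u :=
      ((hF1 u).hasDerivAt).sub (hasDerivAt_Kfun u)
    rw [h1.deriv]
    have h2 := hgode u
    have h3 := Kder_ode u
    linarith
  have hIT : Filter.Tendsto (fun u : ℝ => (6 * |u| ^ 3)⁻¹) atTop (nhds 0) := by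
    apply tendsto_inv_atTop_zero.comp
    apply Filter.Tendsto.const_mul_atTop (by norm_num : (0:ℝ) < 6)
    exact (tendsto_pow_atTop (by norm_num : 3 ≠ 0)).comp tendsto_abs_atTop_atTop
  have hIB : Filter.Tendsto (fun u : ℝ => (6 * |u| ^ 3)⁻¹) atBot (nhds 0) := by
    apply tendsto_inv_atTop_zero.comp
    apply Filter.Tendsto.const_mul_atTop (by norm_num : (0:ℝ) < 6)
    exact (tendsto_pow_atTop (by norm_num : 3 ≠ 0)).comp tendsto_abs_atBot_atTop
  have hDT : Filter.Tendsto (fun u : ℝ => 6 * |u| ^ 3 * (g u - hfun u)) atTop (nhds 0) := by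
    have := hgtop.sub hfun_tendsto_top
    rw [sub_self] at this
    apply this.congr
    intro u
    ring
  have hDB : Filter.Tendsto (fun u : ℝ => 6 * |u| ^ 3 * (g u - hfun u)) atBot (nhds 0) := by
    have := hgbot.sub hfun_tendsto_bot
    rw [sub_self] at this
    apply this.congr
    intro u
    ring
  have hfT : Filter.Tendsto (fun u : ℝ => g u - hfun u) atTop (nhds 0) := by
    have := hIT.mul hDT
    rw [mul_zero] at this
    apply this.congr'
    filter_upwards [eventually_ge_atTop 1] with u hu
    have habs : (0:ℝ) < |u| := abs_pos.mpr (by intro h; rw [h] at hu; norm_num at hu)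
    exact inv_mul_cancel_left₀ (by positivity) _
  have hfB : Filter.Tendsto (fun u : ℝ => g u - hfun u) atBot (nhds 0) := by
    have := hIB.mul hDB
    rw [mul_zero] at this
    apply this.congr'
    filter_upwards [eventually_le_atBot (-1)] with u hu
    have habs : (0:ℝ) < |u| := abs_pos.mpr (by intro h; rw [h] at hu; norm_num at hu)
    exact inv_mul_cancel_left₀ (by positivity) _
  have hle := nonpos_aux (fun u : ℝ => g u - hfun u)
    (fun u : ℝ => (1 + u ^ 2) * deriv g u - Kfun u) hfd hFd hFf hF' hfT hfB
  have hge := nonpos_aux (fun u : ℝ => -(g u - hfun u))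
    (fun u : ℝ => -((1 + u ^ 2) * deriv g u - Kfun u)) hfd.neg hFd.neg
    (fun u => by simp only [deriv.fun_neg]; rw [hFf u]; ring)
    (fun u => by simp only [deriv.fun_neg]; rw [hF' u]; ring)
    (by simpa using hfT.neg) (by simpa using hfB.neg)
  funext u
  have h1 : g u - hfun u ≤ 0 := hle u
  have h2 : -(g u - hfun u) ≤ 0 := hge u
  linarith
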